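/- arXiv:2411.15520 — 2 statements merged into one kernel-verified Lean document; each statement's English description precedes it below -/
import Mathlib

section
/- If (λ, μ) is a Dyck pair, then the Dyck tiling of the skew shape μ \ λ is unique: there is exactly one set {P^1, ..., P^k} of Dyck paths partitioning μ \ λ such that any two are either nested (one covers the other) or distant. -/
namespace ArcPaper

/-- The content of a tile `(r, c)` (row `r`, column `c`, both `1`-indexed). -/
def cont (t : ℕ × ℕ) : ℤ := (t.1 : ℤ) - (t.2 : ℤ)

/-- `r + c - 1`, so that the height of the tile `(r, c)` in the `m × n` rectangle is
`lev t - m`. -/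
def lev (t : ℕ × ℕ) : ℤ := (t.1 : ℤ) + (t.2 : ℤ) - 1

/-- The Young diagram of a partition `μ` (given as the function `r ↦ μ r`, `1`-indexed). -/
def diagram (μ : ℕ → ℕ) : Set (ℕ × ℕ) := {t | 1 ≤ t.1 ∧ 1 ≤ t.2 ∧ t.2 ≤ μ t.1}

/-- A partition in the `m × n` rectangle: weakly decreasing, parts `≤ m`, at most `n` rows. -/
def IsPtn (m n : ℕ) (μ : ℕ → ℕ) : Prop :=
  (∀ i j, 1 ≤ i → i ≤ j → μ j ≤ μ i) ∧ μ 1 ≤ m ∧ ∀ r, n < r → μ r = 0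

/-- One step of a path: the next tile is `(r+1, c)` or `(r, c-1)`. -/
def IsStep (a b : ℕ × ℕ) : Prop := b = (a.1 + 1, a.2) ∨ (2 ≤ a.2 ∧ b = (a.1, a.2 - 1))

/-- `S` is the tile set of a (representative of a) Dyck path with first content `f`, last
content `l`, and height `h`, inside the `m × n` rectangle. -/
def IsDyckRep (m : ℕ) (S : Set (ℕ × ℕ)) (f l h : ℤ) : Prop :=
  ∃ (s : ℕ) (hs : 0 < s) (p : Fin s → ℕ × ℕ),
    Function.Injective p ∧ Set.range p = S ∧
    (∀ i : Fin s, ∀ hi : i.1 + 1 < s, IsStep (p i) (p ⟨i.1 + 1, hi⟩)) ∧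
    (∀ i : Fin s, lev (p ⟨0, hs⟩) ≤ lev (p i)) ∧
    (∀ i : Fin s, lev (p ⟨s - 1, Nat.sub_lt hs Nat.one_pos⟩) ≤ lev (p i)) ∧
    cont (p ⟨0, hs⟩) = f ∧ cont (p ⟨s - 1, Nat.sub_lt hs Nat.one_pos⟩) = l ∧
    lev (p ⟨0, hs⟩) - (m : ℤ) = h

/-- `ν` is obtained from `μ` by removing a Dyck path with contents `[f, l]` and height `h`. -/
def RemovesH (m n : ℕ) (μ : ℕ → ℕ) (f l h : ℤ) (ν : ℕ → ℕ) : Prop :=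
  ∃ S : Set (ℕ × ℕ), IsDyckRep m S f l h ∧ S ⊆ diagram μ ∧ IsPtn m n ν ∧
    diagram ν = diagram μ \ S

/-- `ν` is obtained from `μ` by removing a Dyck path with contents `[f, l]`. -/
def Removes (m n : ℕ) (μ : ℕ → ℕ) (f l : ℤ) (ν : ℕ → ℕ) : Prop :=
  ∃ h, RemovesH m n μ f l h ν

/-- The Dyck path with contents `[f, l]` is removable from `μ`, with height `h`. -/
def DRemH (m n : ℕ) (μ : ℕ → ℕ) (f l h : ℤ) : Prop := ∃ ν, RemovesH m n μ f l h ν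

/-- The Dyck path with contents `[f, l]` is removable from `μ`. -/
def DRem (m n : ℕ) (μ : ℕ → ℕ) (f l : ℤ) : Prop := ∃ ν, Removes m n μ f l ν

/-- The Dyck path with contents `[f, l]` is addable to `μ`, with height `h`. -/
def DAddH (m n : ℕ) (μ : ℕ → ℕ) (f l h : ℤ) : Prop :=
  ∃ ν, IsPtn m n ν ∧ RemovesH m n ν f l h μ

/-- The Dyck path with contents `[f, l]` is addable to `μ`. -/
def DAdd (m n : ℕ) (μ : ℕ → ℕ) (f l : ℤ) : Prop := ∃ h, DAddH m n μ f l h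

/-- Two removable Dyck paths of `μ` commute: each remains removable after the other has been
removed. -/
def DyckCommute (m n : ℕ) (μ : ℕ → ℕ) (P Q : ℤ × ℤ) : Prop :=
  (∃ ν, Removes m n μ P.1 P.2 ν ∧ DRem m n ν Q.1 Q.2) ∧
  (∃ ν, Removes m n μ Q.1 Q.2 ν ∧ DRem m n ν P.1 P.2)

/-- `P ≺ Q`: the Dyck path `Q` covers `P`, i.e. `first(Q) < first(P)` and
`last(P) < last(Q)`. -/
def DyckLt (P Q : ℤ × ℤ) : Prop := Q.1 < P.1 ∧ P.2 < Q.2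

/-- Two Dyck paths (as content intervals) are adjacent: the disjoint union of their content
multisets is an interval. -/
def DyckAdj (P Q : ℤ × ℤ) : Prop := P.2 + 1 = Q.1 ∨ Q.2 + 1 = P.1

/-- Two Dyck paths (as content intervals) are distant: all their contents differ by `≥ 2`. -/
def DyckDistant (P Q : ℤ × ℤ) : Prop := P.2 + 2 ≤ Q.1 ∨ Q.2 + 2 ≤ P.1

/-- The breadth `b(P) = (last(P) - first(P))/2 + 1` of a Dyck path. -/
def brN (P : ℤ × ℤ) : ℕ := ((P.2 - P.1) / 2 + 1).toNat

/-- A Dyck tiling of the skew shape `mu \ lam`: a finite set `T` of Dyck paths (identified by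
their content intervals), together with a choice `S` of tile-set representatives, which
partition `mu \ lam` and are pairwise nested or distant. -/
def IsDyckTiling (m n : ℕ) (lam mu : ℕ → ℕ) (T : Finset (ℤ × ℤ))
    (S : ℤ × ℤ → Set (ℕ × ℕ)) : Prop :=
  (∀ q ∈ T, ∃ h, IsDyckRep m (S q) q.1 q.2 h) ∧
  (∀ q ∈ T, ∀ q' ∈ T, q ≠ q' → Disjoint (S q) (S q')) ∧
  ((⋃ q ∈ T, S q) = diagram mu \ diagram lam) ∧
  (∀ q ∈ T, ∀ q' ∈ T, q ≠ q' → DyckLt q q' ∨ DyckLt q' q ∨ DyckDistant q q')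

/-- The staircase partition `(d, d-1, …, 2, 1)` is contained in `μ`. -/
def HasStaircase (d : ℕ) (μ : ℕ → ℕ) : Prop := ∀ i, 1 ≤ i → i ≤ d → d + 1 - i ≤ μ i

/-- `μ` has defect `d - m`: `d` is maximal with the staircase `(d, …, 1)` contained in `μ`. -/
def DefectIs (m : ℕ) (μ : ℕ → ℕ) (d : ℕ) : Prop :=
  HasStaircase d μ ∧ ¬ HasStaircase (d + 1) μ

/-- A regular partition of the `m × n` rectangle: a partition of defect `0`. -/
def Regular (m n : ℕ) (μ : ℕ → ℕ) : Prop := IsPtn m n μ ∧ DefectIs m μ m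

/-- The conjugate partition: `conj n μ i` is the number of (the at most `n`) rows of `μ` with
at least `i` boxes. -/
def conj (n : ℕ) (μ : ℕ → ℕ) (i : ℕ) : ℕ := ((Finset.Icc 1 n).filter fun r => i ≤ μ r).card

/-- Point `j ∈ {1, …, m+n}` of the weight of `μ` is labelled `∧`. -/
def IsUpPt (m n : ℕ) (μ : ℕ → ℕ) (j : ℤ) : Prop :=
  ∃ i : ℕ, 1 ≤ i ∧ i ≤ m ∧ j = (m : ℤ) + 1 - (i : ℤ) + (conj n μ i : ℤ)

/-- The number of `∧`-labelled points in positions `[a, b]` of the weight of `μ`. -/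
noncomputable def upCount (m n : ℕ) (μ : ℕ → ℕ) (a b : ℤ) : ℕ :=
  {j : ℤ | a ≤ j ∧ j ≤ b ∧ IsUpPt m n μ j}.ncard

/-- The number of `∨`-labelled points in positions `[a, b]` of the weight of `μ`. -/
noncomputable def downCount (m n : ℕ) (μ : ℕ → ℕ) (a b : ℤ) : ℕ :=
  {j : ℤ | a ≤ j ∧ j ≤ b ∧ ¬ IsUpPt m n μ j}.ncard

/-- `(i, j)` is a cup of the cup diagram `μ̲`: point `i` is `∨`, point `j` is `∧`, and the
points strictly between `i` and `j` form a balanced, completely matched configuration. -/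
def IsCup (m n : ℕ) (μ : ℕ → ℕ) (i j : ℤ) : Prop :=
  1 ≤ i ∧ j ≤ (m : ℤ) + (n : ℤ) ∧ i < j ∧ ¬ IsUpPt m n μ i ∧ IsUpPt m n μ j ∧
  upCount m n μ (i + 1) (j - 1) = downCount m n μ (i + 1) (j - 1) ∧
  ∀ k : ℤ, i < k → k < j → upCount m n μ (i + 1) k ≤ downCount m n μ (i + 1) k

/-- `R = rt(Q)`: the maximal-breadth element of the set of addable Dyck paths of `lam` of
height `1` lying strictly to the right of `Q`. -/
def IsRt (m n : ℕ) (lam : ℕ → ℕ) (Q R : ℤ × ℤ) : Prop :=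
  DAddH m n lam R.1 R.2 1 ∧ Q.2 < R.1 ∧
  ∀ R' : ℤ × ℤ, DAddH m n lam R'.1 R'.2 1 → Q.2 < R'.1 → brN R' ≤ brN R

/-- `R = ⟨P ∪ Q⟩_μ`: the smallest removable Dyck path of `μ` containing `P ∪ Q`. -/
def IsMerge (m n : ℕ) (μ : ℕ → ℕ) (P Q R : ℤ × ℤ) : Prop :=
  DRem m n μ R.1 R.2 ∧ R.1 ≤ P.1 ∧ P.2 ≤ R.2 ∧ R.1 ≤ Q.1 ∧ Q.2 ≤ R.2 ∧
  ∀ R' : ℤ × ℤ, DRem m n μ R'.1 R'.2 → R'.1 ≤ P.1 → P.2 ≤ R'.2 → R'.1 ≤ Q.1 → Q.2 ≤ R'.2 →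
    R'.1 ≤ R.1 ∧ R.2 ≤ R'.2

end ArcPaper

open ArcPaper

/-! A Dyck path meets each content of its interval `[first, last]` in exactly one tile, so in any
Dyck tiling of `mu \ lam` the number of paths whose interval contains `c` equals the number of
tiles of content `c` in the skew shape; this cover count does not depend on the tiling. A family
of intervals that are pairwise nested or distant is determined by its cover count: the interval
with the smallest left endpoint starts where the count first becomes positive and, since no
other interval can reach past it without covering it, ends just before the count next drops to
zero. Removing it and inducting on the size of the family gives uniqueness. -/

namespace ArcPaper

lemma IsStep.cont_eq {a b : ℕ × ℕ} (h : IsStep a b) : cont b = cont a + 1 := by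
  rcases h with rfl | ⟨ha, rfl⟩
  · simp only [cont]; push_cast; ring
  · simp only [cont]; push_cast [Nat.cast_sub (by omega : 1 ≤ a.2)]; ring

lemma cont_of_isStep_path {s : ℕ} (hs : 0 < s) {p : Fin s → ℕ × ℕ}
    (hstep : ∀ i : Fin s, ∀ hi : i.1 + 1 < s, IsStep (p i) (p ⟨i.1 + 1, hi⟩)) :
    ∀ (i : ℕ) (hi : i < s), cont (p ⟨i, hi⟩) = cont (p ⟨0, hs⟩) + i := by
  intro i
  induction i with
  | zero => simp
  | succ i ih =>
    intro hi
    rw [(hstep ⟨i, by omega⟩ hi).cont_eq, ih]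
    push_cast; ring

lemma IsDyckRep.bijOn_cont {m : ℕ} {S : Set (ℕ × ℕ)} {f l h : ℤ} (hS : IsDyckRep m S f l h) :
    Set.BijOn cont S (Set.Icc f l) := by
  obtain ⟨s, hs, p, -, rfl, hstep, -, -, hf, hl, -⟩ := hS
  have hcont : ∀ i : Fin s, cont (p i) = f + i := fun i => by
    rw [← hf, ← cont_of_isStep_path hs hstep i.1 i.2]
  have hlast : l = f + (s - 1 : ℕ) := by rw [← hl, hcont]
  refine ⟨?_, ?_, ?_⟩
  · rintro _ ⟨i, rfl⟩
    rw [Set.mem_Icc, hcont, hlast]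
    have := i.2
    omega
  · rintro _ ⟨i, rfl⟩ _ ⟨j, rfl⟩ hij
    rw [hcont, hcont] at hij
    exact congrArg p (Fin.ext (by omega))
  · rintro c ⟨hfc, hcl⟩
    rw [hlast] at hcl
    refine ⟨p ⟨(c - f).toNat, by omega⟩, ⟨_, rfl⟩, ?_⟩
    rw [hcont]
    dsimp only
    omega

lemma IsDyckRep.le {m : ℕ} {S : Set (ℕ × ℕ)} {f l h : ℤ} (hS : IsDyckRep m S f l h) : f ≤ l := by
  obtain ⟨t, ht⟩ : S.Nonempty := by
    obtain ⟨s, hs, p, -, rfl, -⟩ := hS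
    exact ⟨_, ⟨0, hs⟩, rfl⟩
  exact Set.nonempty_Icc.mp ⟨_, hS.bijOn_cont.mapsTo ht⟩

def coverCount (T : Finset (ℤ × ℤ)) (c : ℤ) : ℕ := (T.filter fun q => q.1 ≤ c ∧ c ≤ q.2).card

lemma coverCount_empty : coverCount ∅ = 0 := by
  ext c
  simp [coverCount]

lemma coverCount_pos {T : Finset (ℤ × ℤ)} {q : ℤ × ℤ} (hq : q ∈ T) {c : ℤ} (h₁ : q.1 ≤ c)
    (h₂ : c ≤ q.2) : 0 < coverCount T c :=
  Finset.card_pos.2 ⟨q, Finset.mem_filter.2 ⟨hq, h₁, h₂⟩⟩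

lemma coverCount_eq_zero {T : Finset (ℤ × ℤ)} {c : ℤ} :
    coverCount T c = 0 ↔ ∀ q ∈ T, ¬ (q.1 ≤ c ∧ c ≤ q.2) := by
  rw [coverCount, Finset.card_eq_zero, Finset.filter_eq_empty_iff]

lemma coverCount_erase_add {T : Finset (ℤ × ℤ)} {q : ℤ × ℤ} (hq : q ∈ T) (c : ℤ) :
    coverCount (T.erase q) c + (if q.1 ≤ c ∧ c ≤ q.2 then 1 else 0) = coverCount T c := by
  rw [coverCount, coverCount, Finset.filter_erase]
  split_ifs with hc
  · exact Finset.card_erase_add_one (Finset.mem_filter.2 ⟨hq, hc⟩)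
  · have hqc : q ∉ T.filter fun r => r.1 ≤ c ∧ c ≤ r.2 := fun h => hc (Finset.mem_filter.1 h).2
    rw [Finset.erase_eq_of_notMem hqc, add_zero]

lemma eq_empty_of_coverCount_eq_zero {T : Finset (ℤ × ℤ)} (hT : ∀ q ∈ T, q.1 ≤ q.2)
    (h : coverCount T = 0) : T = ∅ :=
  Finset.eq_empty_of_forall_notMem fun q hq =>
    (coverCount_pos hq le_rfl (hT q hq)).ne' (congrFun h q.1)

def IsFirstRun (F : ℤ → ℕ) (q : ℤ × ℤ) : Prop :=
  q.1 ≤ q.2 ∧ (∀ c < q.1, F c = 0) ∧ (∀ c, q.1 ≤ c → c ≤ q.2 → 0 < F c) ∧ F (q.2 + 1) = 0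

lemma IsFirstRun.unique {F : ℤ → ℕ} {q q' : ℤ × ℤ} (h : IsFirstRun F q) (h' : IsFirstRun F q') :
    q = q' := by
  obtain ⟨hle, hbelow, hpos, hend⟩ := h
  obtain ⟨hle', hbelow', hpos', hend'⟩ := h'
  have hfst : q.1 = q'.1 := by
    by_contra hne
    rcases lt_or_gt_of_ne hne with hlt | hlt
    · exact (hpos q.1 le_rfl hle).ne' (hbelow' _ hlt)
    · exact (hpos' q'.1 le_rfl hle').ne' (hbelow _ hlt)
  have hsnd : q.2 = q'.2 := by
    by_contra hne
    rcases lt_or_gt_of_ne hne with hlt | hlt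
    · exact (hpos' (q.2 + 1) (by omega) (by omega)).ne' hend
    · exact (hpos (q'.2 + 1) (by omega) (by omega)).ne' hend'
  exact Prod.ext hfst hsnd

def NestedOrDistant (P Q : ℤ × ℤ) : Prop := DyckLt P Q ∨ DyckLt Q P ∨ DyckDistant P Q

lemma isFirstRun_coverCount {T : Finset (ℤ × ℤ)} (hT : ∀ q ∈ T, q.1 ≤ q.2)
    (hpair : (T : Set (ℤ × ℤ)).Pairwise NestedOrDistant) {q : ℤ × ℤ} (hq : q ∈ T)
    (hmin : ∀ q' ∈ T, q.1 ≤ q'.1) : IsFirstRun (coverCount T) q := by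
  refine ⟨hT q hq, fun c hc => ?_, fun c h₁ h₂ => coverCount_pos hq h₁ h₂, ?_⟩
  · exact coverCount_eq_zero.2 fun q' hq' hcq' => by have := hmin q' hq'; omega
  · refine coverCount_eq_zero.2 fun q' hq' hcq' => ?_
    have hne : q ≠ q' := by rintro rfl; omega
    have := hmin q' hq'
    have := hT q' hq'
    rcases hpair hq hq' hne with h | h | h <;>
      simp only [DyckLt, DyckDistant] at h <;> omega

theorem eq_of_coverCount_eq {T T' : Finset (ℤ × ℤ)} (hT : ∀ q ∈ T, q.1 ≤ q.2)
    (hT' : ∀ q ∈ T', q.1 ≤ q.2) (hpair : (T : Set (ℤ × ℤ)).Pairwise NestedOrDistant)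
    (hpair' : (T' : Set (ℤ × ℤ)).Pairwise NestedOrDistant) (h : coverCount T = coverCount T') :
    T = T' := by
  obtain ⟨k, hk⟩ : ∃ k, T.card = k := ⟨_, rfl⟩
  induction k generalizing T T' with
  | zero =>
    rw [Finset.card_eq_zero.1 hk] at h ⊢
    exact (eq_empty_of_coverCount_eq_zero hT' (h ▸ coverCount_empty)).symm
  | succ k ih =>
    have hne : T.Nonempty := Finset.card_pos.1 (by omega)
    have hne' : T'.Nonempty := Finset.nonempty_iff_ne_empty.2 fun hemp =>
      hne.ne_empty (eq_empty_of_coverCount_eq_zero hT (h.trans (hemp ▸ coverCount_empty)))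
    obtain ⟨q, hq, hmin⟩ := T.exists_min_image Prod.fst hne
    obtain ⟨q', hq', hmin'⟩ := T'.exists_min_image Prod.fst hne'
    have hqq' : q = q' := (isFirstRun_coverCount hT hpair hq hmin).unique
      (h ▸ isFirstRun_coverCount hT' hpair' hq' hmin')
    subst hqq'
    have herase : T.erase q = T'.erase q := by
      refine ih (fun r hr => hT r (Finset.mem_of_mem_erase hr))
        (fun r hr => hT' r (Finset.mem_of_mem_erase hr))
        (hpair.mono (by simp)) (hpair'.mono (by simp)) ?_ (by rw [Finset.card_erase_of_mem hq]; omega)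
      ext c
      have e := coverCount_erase_add hq c
      have e' := coverCount_erase_add hq' c
      rw [h] at e
      omega
    rw [← Finset.insert_erase hq, herase, Finset.insert_erase hq']

lemma IsDyckTiling.fst_le_snd {m n : ℕ} {lam mu : ℕ → ℕ} {T : Finset (ℤ × ℤ)}
    {S : ℤ × ℤ → Set (ℕ × ℕ)} (h : IsDyckTiling m n lam mu T S) : ∀ q ∈ T, q.1 ≤ q.2 :=
  fun q hq => (h.1 q hq).choose_spec.le

lemma IsDyckTiling.coverCount_eq {m n : ℕ} {lam mu : ℕ → ℕ} {T : Finset (ℤ × ℤ)}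
    {S : ℤ × ℤ → Set (ℕ × ℕ)} (h : IsDyckTiling m n lam mu T S) (c : ℤ) :
    coverCount T c = {t ∈ diagram mu \ diagram lam | cont t = c}.ncard := by
  obtain ⟨hrep, hdisj, hunion, -⟩ := h
  have hbij : ∀ q ∈ T, Set.BijOn cont (S q) (Set.Icc q.1 q.2) :=
    fun q hq => (hrep q hq).choose_spec.bijOn_cont
  have hex : ∀ q ∈ T, q.1 ≤ c → c ≤ q.2 → ∃ t ∈ S q, cont t = c :=
    fun q hq h₁ h₂ => (hbij q hq).surjOn ⟨h₁, h₂⟩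
  rw [coverCount, ← Set.ncard_coe_finset]
  refine Set.ncard_congr (fun q _ => Function.invFunOn cont (S q) c) ?_ ?_ ?_
  · rintro q hq
    obtain ⟨hqT, h₁, h₂⟩ := Finset.mem_filter.1 hq
    refine ⟨?_, Function.invFunOn_eq (hex q hqT h₁ h₂)⟩
    rw [← hunion]
    exact Set.mem_biUnion hqT (Function.invFunOn_mem (hex q hqT h₁ h₂))
  · intro q q' hq hq' heq
    obtain ⟨hqT, h₁, h₂⟩ := Finset.mem_filter.1 hq
    obtain ⟨hqT', h₁', h₂'⟩ := Finset.mem_filter.1 hq'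
    by_contra hne
    exact Set.disjoint_left.1 (hdisj q hqT q' hqT' hne) (Function.invFunOn_mem (hex q hqT h₁ h₂))
      (heq ▸ Function.invFunOn_mem (hex q' hqT' h₁' h₂'))
  · rintro t ⟨ht, rfl⟩
    rw [← hunion] at ht
    obtain ⟨q, hqT, htq⟩ := Set.mem_iUnion₂.1 ht
    have hmem := (hbij q hqT).mapsTo htq
    refine ⟨q, Finset.mem_filter.2 ⟨hqT, hmem⟩, ?_⟩
    exact (hbij q hqT).injOn (Function.invFunOn_mem ⟨t, htq, rfl⟩) htq
      (Function.invFunOn_eq ⟨t, htq, rfl⟩)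

end ArcPaper

theorem stmt13_general (m n : ℕ) (lam mu : ℕ → ℕ)
    (T T' : Finset (ℤ × ℤ)) (S S' : ℤ × ℤ → Set (ℕ × ℕ))
    (h1 : IsDyckTiling m n lam mu T S) (h2 : IsDyckTiling m n lam mu T' S') :
    T = T' :=
  eq_of_coverCount_eq h1.fst_le_snd h2.fst_le_snd h1.2.2.2 h2.2.2.2
    (funext fun c => (h1.coverCount_eq c).trans (h2.coverCount_eq c).symm)

/-- If `(lam, mu)` is a Dyck pair, then the Dyck tiling of the skew shape `mu \ lam` is
unique: any two sets of Dyck paths (identified by their content intervals) partitioning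
`mu \ lam` such that any two distinct members are nested or distant, coincide. -/
theorem stmt13 (m n : ℕ) (lam mu : ℕ → ℕ)
    (hlam : IsPtn m n lam) (hmu : IsPtn m n mu) (hsub : diagram lam ⊆ diagram mu)
    (T T' : Finset (ℤ × ℤ)) (S S' : ℤ × ℤ → Set (ℕ × ℕ))
    (h1 : IsDyckTiling m n lam mu T S) (h2 : IsDyckTiling m n lam mu T' S') :
    T = T' :=
  stmt13_general m n lam mu T T' S S' h1 h2
end

section
/- In the presented algebra A_{m,m}, for λ regular and any P ∈ DRem_0(λ), the generalized loop element squares to zero: L^λ_λ(-P)^2 = 0. -/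
open ArcPaper

/-!
If `last(P) = m - 1`, then `L^λ_λ(-P)` is the loop `L^λ_λ`, whose square vanishes. Otherwise
`L^λ_λ(-P) = -L^λ_λ + s X Y` with `X = D^λ_ν`, `Y = D^ν_λ`, `λ = ν - rt(P)` and
`s = (-1)^(b(rt(P))+1)`. As `rt(P)` has maximal last content among the addable paths of height
one, the cubic relation gives `(X Y)² = 2 s L^λ_λ X Y`; as the loops commute with `X` and `Y`,
the square expands to `(L^λ_λ)² - 2 s L^λ_λ X Y + (X Y)² = 0`.

On the combinatorial side, for regular `λ` the first box outside `λ` on every diagonal has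
height at least one. A removable path of height zero ending at content `l` forces height exactly
one at content `l + 1`, an addable path of height one ends at a content of height one, and
between two contents of height one the outer boxes of `λ` form an addable path of height one.
So `rt(P)` runs from `last(P) + 1` to the last content of height one.
-/

namespace ArcPaper

lemma le_card_filter_Icc_iff {p : ℕ → Prop} [DecidablePred p]
    (hp : ∀ i j, 1 ≤ i → i ≤ j → p j → p i) {m r : ℕ} (hr : 1 ≤ r) (hrm : r ≤ m) :
    r ≤ ((Finset.Icc 1 m).filter p).card ↔ p r := by
  constructor
  · intro h
    by_contra hpr
    have hsub : (Finset.Icc 1 m).filter p ⊆ Finset.Icc 1 (r - 1) := by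
      intro j hj
      rw [Finset.mem_filter, Finset.mem_Icc] at hj
      refine Finset.mem_Icc.mpr ⟨hj.1.1, ?_⟩
      by_contra hjr
      exact hpr (hp r j hr (by omega) hj.2)
    have := Finset.card_le_card hsub
    simp only [Nat.card_Icc] at this
    omega
  · intro h
    have hsub : Finset.Icc 1 r ⊆ (Finset.Icc 1 m).filter p := by
      intro j hj
      rw [Finset.mem_Icc] at hj
      exact Finset.mem_filter.mpr
        ⟨Finset.mem_Icc.mpr ⟨hj.1, hj.2.trans hrm⟩, hp j r hj.1 hj.2 h⟩
    simpa using Finset.card_le_card hsub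

lemma le_add_of_forall_succ_le {g : ℤ → ℕ} (hg : ∀ k, g (k + 1) ≤ g k + 1) (k : ℤ)
    (n : ℕ) : g (k + n) ≤ g k + n := by
  induction n with
  | zero => simp
  | succ n ih =>
    have := hg (k + n)
    push_cast
    rw [← add_assoc]
    omega

lemma brN_le_brN {P Q : ℤ × ℤ} (h1 : Q.1 ≤ P.1) (h2 : P.2 ≤ Q.2) : brN P ≤ brN Q := by
  simp only [brN]
  omega

lemma cont_of_isStep {t t' : ℕ × ℕ} (h : IsStep t t') : cont t' = cont t + 1 := by
  rcases h with rfl | ⟨h2, rfl⟩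
  · simp only [cont]
    push_cast
    ring
  · simp only [cont]
    push_cast [Nat.cast_sub (by omega : 1 ≤ t.2)]
    ring

lemma IsPtn.le_of_mem_diagram {m : ℕ} {μ : ℕ → ℕ} (hμ : IsPtn m m μ) {t : ℕ × ℕ}
    (ht : t ∈ diagram μ) : t.1 ≤ m ∧ t.2 ≤ m := by
  obtain ⟨h1, h2, h3⟩ := ht
  constructor
  · by_contra hh
    have := hμ.2.2 t.1 (by omega)
    omega
  · have := hμ.1 1 t.1 le_rfl h1
    have := hμ.2.1
    omega

lemma Regular.of_le {m n : ℕ} {μ ν : ℕ → ℕ} (hμ : Regular m n μ) (hν : IsPtn m n ν)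
    (hle : ∀ r, 1 ≤ r → μ r ≤ ν r) : Regular m n ν := by
  refine ⟨hν, fun i h1 h2 => (hμ.2.1 i h1 h2).trans (hle i h1), fun hs => ?_⟩
  have := hs 1 le_rfl (by omega)
  have := hν.2.1
  omega

lemma IsDyckRep.exists_last {m : ℕ} {S : Set (ℕ × ℕ)} {f l h : ℤ}
    (hS : IsDyckRep m S f l h) :
    f ≤ l ∧ ∃ t ∈ S, cont t = l ∧ lev t = m + h ∧
      ∀ t' ∈ S, cont t' ≤ l ∧ (cont t' = l → t' = t) := by
  obtain ⟨s, hs, p, -, rfl, hstep, hmin0, hminl, hcf, hcl, hlev⟩ := hS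
  have hcont : ∀ i : Fin s, cont (p i) = f + i := by
    rintro ⟨i, hi⟩
    induction i with
    | zero => simpa using hcf
    | succ i ih =>
      rw [cont_of_isStep (hstep ⟨i, by omega⟩ hi), ih (by omega)]
      push_cast
      ring
  have hl : l = f + (s - 1 : ℕ) := by rw [← hcl, hcont]
  refine ⟨by omega, _, ⟨_, rfl⟩, hcl, ?_, ?_⟩
  · have := le_antisymm (hminl ⟨0, hs⟩) (hmin0 _)
    omega
  · rintro _ ⟨i, rfl⟩
    have hi := i.2
    refine ⟨by rw [hcont, hl]; omega, fun hil => congrArg p (Fin.ext ?_)⟩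
    rw [hcont, hl] at hil
    show i.1 = s - 1
    omega

lemma isDyckRep_image_Icc (m : ℕ) (q : ℤ → ℕ × ℕ) {a b : ℤ} (hab : a ≤ b)
    (hcont : ∀ k ∈ Set.Icc a b, cont (q k) = k)
    (hstep : ∀ k, a ≤ k → k < b → IsStep (q k) (q (k + 1)))
    (hlev : ∀ k ∈ Set.Icc a b, lev (q a) ≤ lev (q k) ∧ lev (q b) ≤ lev (q k)) :
    IsDyckRep m (q '' Set.Icc a b) a b (lev (q a) - m) := by
  obtain ⟨n, rfl⟩ : ∃ n : ℕ, b = a + n := ⟨(b - a).toNat, by omega⟩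
  have hmem : ∀ i : Fin (n + 1), a + (i : ℕ) ∈ Set.Icc a (a + n) := fun i =>
    ⟨by omega, by have := i.2; omega⟩
  have hlast : a + ((n + 1 - 1 : ℕ) : ℤ) = a + n := by simp
  refine ⟨n + 1, n.succ_pos, fun i => q (a + (i : ℕ)), fun i j hij => ?_, ?_, fun i hi => ?_,
    fun i => by simpa using (hlev _ (hmem i)).1,
    fun i => by simpa [hlast] using (hlev _ (hmem i)).2, by simpa using hcont a ⟨le_rfl, hab⟩,
    by simpa [hlast] using hcont _ ⟨hab, le_rfl⟩, by simp⟩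
  · have := congrArg cont hij
    simp only [hcont _ (hmem i), hcont _ (hmem j)] at this
    exact Fin.ext (by omega)
  · ext t
    constructor
    · rintro ⟨i, rfl⟩
      exact ⟨_, hmem i, rfl⟩
    · rintro ⟨k, hk, rfl⟩
      refine ⟨⟨(k - a).toNat, by have := hk.2; omega⟩, ?_⟩
      simp only
      congr 1
      have := hk.1
      omega
  · have := hstep (a + i) (by omega) (by omega)
    simpa [add_assoc] using this

/-- `diagRows m μ k` counts the rows `j ≤ m` with `μ j - j ≥ -k`. For a partition these rows
form an initial segment, so the first box of content `k` outside `μ` is `outerBox m μ k`, of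
height `2 * diagRows m μ k + 1 - k - m` (when `k ≤ diagRows m μ k`, i.e. its column is
positive and `toNat` does not truncate). -/
def diagRows (m : ℕ) (μ : ℕ → ℕ) (k : ℤ) : ℕ :=
  ((Finset.Icc 1 m).filter fun j => -k ≤ (μ j : ℤ) - j).card

def outerBox (m : ℕ) (μ : ℕ → ℕ) (k : ℤ) : ℕ × ℕ :=
  (diagRows m μ k + 1, ((diagRows m μ k : ℤ) + 1 - k).toNat)

section diagRows

variable {m n : ℕ} {μ : ℕ → ℕ}

lemma diagRows_le (k : ℤ) : diagRows m μ k ≤ m :=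
  (Finset.card_filter_le _ _).trans (by simp)

lemma diagRows_mono : Monotone (diagRows m μ) := fun _ _ h =>
  Finset.card_le_card (Finset.monotone_filter_right _ fun _ hj => by omega)

lemma le_diagRows_iff (hμ : IsPtn m n μ) {r : ℕ} (hr : 1 ≤ r) (hrm : r ≤ m) (k : ℤ) :
    r ≤ diagRows m μ k ↔ -k ≤ (μ r : ℤ) - r := by
  refine le_card_filter_Icc_iff (fun i j hi hij h => ?_) hr hrm
  have : (μ j : ℤ) ≤ μ i := by exact_mod_cast hμ.1 i j hi hij
  omega

lemma diagRows_succ_le (hμ : IsPtn m n μ) (k : ℤ) :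
    diagRows m μ (k + 1) ≤ diagRows m μ k + 1 := by
  by_contra! h
  obtain ⟨j, hj⟩ : ∃ j, j = diagRows m μ k + 1 := ⟨_, rfl⟩
  have hjm : j + 1 ≤ m := by have := diagRows_le (m := m) (μ := μ) (k + 1); omega
  have hj1 : -(k + 1) ≤ (μ (j + 1) : ℤ) - (j + 1 : ℕ) :=
    (le_diagRows_iff hμ (by omega) hjm _).mp (by omega)
  have hμj : (μ (j + 1) : ℤ) ≤ μ j := by exact_mod_cast hμ.1 j (j + 1) (by omega) (by omega)
  push_cast at hj1
  have := (le_diagRows_iff hμ (r := j) (by omega) (by omega) k).mpr (by omega)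
  omega

lemma diagRows_eq (hμ : IsPtn m n μ) {r : ℕ} (hr : 1 ≤ r) (hrm : r ≤ m) {k : ℤ}
    (hin : -k ≤ (μ r : ℤ) - r) (hout : r + 1 ≤ m → (μ (r + 1) : ℤ) - (r + 1) < -k) :
    diagRows m μ k = r := by
  refine le_antisymm ?_ ((le_diagRows_iff hμ hr hrm k).mpr hin)
  by_contra! h
  have hr1 : r + 1 ≤ m := h.trans_le (diagRows_le k)
  have := (le_diagRows_iff hμ (by omega) hr1 k).mp h
  push_cast at this
  have := hout hr1
  omega

lemma le_diagRows_sub_iff (hμ : IsPtn m m μ) {r c : ℕ} (hr : 1 ≤ r) (hc : 1 ≤ c) :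
    r ≤ diagRows m μ (r - c) ↔ c ≤ μ r := by
  rcases le_or_gt r m with hrm | hrm
  · rw [le_diagRows_iff hμ hr hrm]
    omega
  · have := diagRows_le (m := m) (μ := μ) (r - c)
    have := hμ.2.2 r hrm
    omega

lemma Regular.le_two_mul_diagRows (hμ : Regular m n μ) {k : ℤ} (hk : -(m : ℤ) ≤ k)
    (hk' : k ≤ m) : (m : ℤ) + k ≤ 2 * diagRows m μ k := by
  rcases le_or_gt ((m : ℤ) + k) 0 with h | h
  · omega
  · obtain ⟨r, hr⟩ : ∃ r : ℕ, (m : ℤ) + k ≤ 2 * r ∧ 2 * (r : ℤ) ≤ m + k + 1 :=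
      ⟨((m + k + 1) / 2).toNat, by omega⟩
    have hst := hμ.2.1 r (by omega) (by omega)
    have : ((m + 1 - r : ℕ) : ℤ) ≤ μ r := by exact_mod_cast hst
    have := (le_diagRows_iff hμ.1 (r := r) (by omega) (by omega) k).mpr (by omega)
    omega

lemma outerBox_notMem_diagram (hμ : IsPtn m m μ) (k : ℤ) : outerBox m μ k ∉ diagram μ := by
  rintro ⟨h1, h2, h3⟩
  simp only [outerBox] at h1 h2 h3
  have hk := (le_diagRows_sub_iff hμ h1 h2).mpr h3
  push_cast at hk
  rw [Int.toNat_of_nonneg (by omega)] at hk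
  have : diagRows m μ k + 1 ≤ diagRows m μ k := by
    convert hk using 2
    ring
  omega

end diagRows

section boundary

variable {m : ℕ} {lam : ℕ → ℕ}

lemma DRemH.two_mul_diagRows_of_height_zero (hlam : Regular m m lam) {f l : ℤ}
    (hP : DRemH m m lam f l 0) :
    1 - (m : ℤ) ≤ l ∧ l ≤ (m : ℤ) - 1 ∧
      2 * (diagRows m lam (l + 1) : ℤ) = m + l + 1 := by
  obtain ⟨ν, S, hS, hSsub, hν, hdiag⟩ := hP
  obtain ⟨-, t, htS, hct, hlt, hlast⟩ := hS.exists_last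
  have htlam := hSsub htS
  obtain ⟨hrm, hcm⟩ := hlam.1.le_of_mem_diagram htlam
  obtain ⟨hr1, hc1, hclam⟩ := htlam
  simp only [cont] at hct
  simp only [lev] at hlt
  have hrow : diagRows m lam (l + 1) = t.1 := by
    refine diagRows_eq hlam.1 hr1 hrm (by omega) fun hr1m => ?_
    by_contra! hbelow
    -- the box below the last tile has content `l + 1`, so it survives in `ν`, and with it `t`
    have hin : ((t.1 + 1, t.2) : ℕ × ℕ) ∈ diagram ν := by
      rw [hdiag]
      refine ⟨⟨by omega, hc1, show t.2 ≤ lam (t.1 + 1) by omega⟩, fun hS' => ?_⟩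
      have := (hlast _ hS').1
      simp only [cont] at this
      push_cast at this
      omega
    have htν : t ∈ diagram ν :=
      ⟨hr1, hc1, hin.2.2.trans (hν.1 t.1 (t.1 + 1) hr1 (by omega))⟩
    rw [hdiag] at htν
    exact htν.2 htS
  omega

lemma DAddH.two_mul_diagRows_of_height_one (hlam : Regular m m lam) {a b : ℤ}
    (h : DAddH m m lam a b 1) :
    a ≤ b ∧ b ≤ (m : ℤ) - 2 ∧ 2 * (diagRows m lam b : ℤ) = m + b := by
  obtain ⟨ν, hν, S, hS, hSsub, -, hdiag⟩ := h
  obtain ⟨hab, t, htS, hct, hlt, hlast⟩ := hS.exists_last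
  have htν := hSsub htS
  obtain ⟨hrm, hcm⟩ := hν.le_of_mem_diagram htν
  obtain ⟨hr1, hc1, hcν⟩ := htν
  simp only [cont] at hct
  simp only [lev] at hlt
  have hnot : t ∉ diagram lam := by
    rw [hdiag]
    exact fun h => h.2 htS
  -- the box diagonally above-left of the last tile has content `b` but is not the last tile
  have hprev : ((t.1 - 1, t.2 - 1) : ℕ × ℕ) ∈ diagram lam := by
    rw [hdiag]
    refine ⟨⟨by omega, by omega, ?_⟩, fun hS' => ?_⟩
    · have := hν.1 (t.1 - 1) t.1 (by omega) (by omega)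
      simp only
      omega
    · have hcont : cont ((t.1 - 1, t.2 - 1) : ℕ × ℕ) = b := by
        simp only [cont]
        push_cast [Nat.cast_sub (by omega : 1 ≤ t.1), Nat.cast_sub (by omega : 1 ≤ t.2)]
        omega
      have := congrArg Prod.fst ((hlast _ hS').2 hcont)
      simp only at this
      omega
  obtain ⟨r, hr⟩ : ∃ r, t.1 = r + 1 := ⟨t.1 - 1, by omega⟩
  have hrow : diagRows m lam b = r := by
    refine diagRows_eq hlam.1 (by omega) (by omega) ?_ fun _ => ?_
    · have := hprev.2.2
      simp only [hr, Nat.add_sub_cancel] at this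
      omega
    · have : lam t.1 < t.2 := by
        by_contra! hh
        exact hnot ⟨hr1, hc1, hh⟩
      rw [hr] at this
      omega
  omega

end boundary

/-- The partition whose diagonal of content `k` occupies the rows `≤ g k`, with parts capped
at `N`. -/
def partitionOfProfile (N : ℕ) (g : ℤ → ℕ) (r : ℕ) : ℕ :=
  ((Finset.Icc 1 N).filter fun c : ℕ => r ≤ g ((r : ℤ) - c)).card

section partitionOfProfile

variable {N : ℕ} {g : ℤ → ℕ}

lemma partitionOfProfile_le (r : ℕ) : partitionOfProfile N g r ≤ N :=
  (Finset.card_filter_le _ _).trans (by simp)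

lemma le_partitionOfProfile_iff (hg : Monotone g) {r c : ℕ} (hc : 1 ≤ c) (hcN : c ≤ N) :
    c ≤ partitionOfProfile N g r ↔ r ≤ g (r - c) :=
  le_card_filter_Icc_iff (fun _ _ _ hij h => h.trans (hg (by omega))) hc hcN

lemma partitionOfProfile_anti (hg : ∀ k, g (k + 1) ≤ g k + 1) {r r' : ℕ} (h : r ≤ r') :
    partitionOfProfile N g r' ≤ partitionOfProfile N g r := by
  refine Finset.card_le_card (Finset.monotone_filter_right _ fun c hc => ?_)
  have := le_add_of_forall_succ_le hg (r - c) (r' - r)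
  push_cast [Nat.cast_sub h] at this
  have e : (r : ℤ) - c + (r' - r) = r' - c := by ring
  rw [e] at this
  omega

end partitionOfProfile

section outerBox

variable {m n : ℕ} {μ : ℕ → ℕ}

lemma cont_outerBox {k : ℤ} (hk : k ≤ diagRows m μ k) : cont (outerBox m μ k) = k := by
  simp only [cont, outerBox]
  push_cast
  rw [Int.toNat_of_nonneg (by omega)]
  ring

lemma lev_outerBox {k : ℤ} (hk : k ≤ diagRows m μ k) :
    lev (outerBox m μ k) = 2 * diagRows m μ k + 1 - k := by
  simp only [lev, outerBox]
  push_cast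
  rw [Int.toNat_of_nonneg (by omega)]
  ring

lemma isStep_outerBox (hμ : IsPtn m n μ) {k : ℤ} (hk : k + 1 ≤ diagRows m μ k) :
    IsStep (outerBox m μ k) (outerBox m μ (k + 1)) := by
  have h1 := diagRows_mono (m := m) (μ := μ) (by omega : k ≤ k + 1)
  have h2 := diagRows_succ_le hμ k
  simp only [IsStep, outerBox, Prod.mk.injEq]
  rcases (by omega : diagRows m μ (k + 1) = diagRows m μ k + 1 ∨
    diagRows m μ (k + 1) = diagRows m μ k) with h | h
  · left
    rw [h]
    omega
  · right
    rw [h]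
    omega

lemma mem_outerBox_image_iff {a b : ℤ} {t : ℕ × ℕ} (ht : 1 ≤ t.2) :
    t ∈ outerBox m μ '' Set.Icc a b ↔
      cont t ∈ Set.Icc a b ∧ t.1 = diagRows m μ (cont t) + 1 := by
  constructor
  · rintro ⟨k, hk, rfl⟩
    simp only [outerBox] at ht
    rw [cont_outerBox (by omega)]
    exact ⟨hk, rfl⟩
  · rintro ⟨hk, hrow⟩
    refine ⟨cont t, hk, Prod.ext hrow.symm ?_⟩
    simp only [outerBox, cont] at hrow ⊢
    omega

end outerBox

/-- Raising the `diagRows` profile of `lam` by one on the contents `a, …, b` adds the outer boxes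
of these contents to `lam`. -/
def addProfile (m : ℕ) (lam : ℕ → ℕ) (a b : ℤ) (k : ℤ) : ℕ :=
  diagRows m lam k + if a ≤ k ∧ k ≤ b then 1 else 0

section addPath

variable {m : ℕ} {lam : ℕ → ℕ} {a b : ℤ}

lemma monotone_addProfile (hlam : Regular m m lam) (hb : b ≤ (m : ℤ) - 2)
    (hZb : 2 * (diagRows m lam b : ℤ) = m + b) : Monotone (addProfile m lam a b) := by
  refine monotone_int_of_le_succ fun k => ?_
  have := diagRows_mono (m := m) (μ := lam) (by omega : k ≤ k + 1)
  simp only [addProfile]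
  rcases eq_or_ne k b with rfl | hk
  · have := hlam.le_two_mul_diagRows (k := k + 1) (by omega) (by omega)
    split_ifs <;> omega
  · split_ifs <;> omega

lemma addProfile_succ_le (hlam : Regular m m lam) (ha : 2 - (m : ℤ) ≤ a)
    (hZa : 2 * (diagRows m lam a : ℤ) = m + a) (k : ℤ) :
    addProfile m lam a b (k + 1) ≤ addProfile m lam a b k + 1 := by
  have := diagRows_succ_le hlam.1 k
  simp only [addProfile]
  rcases eq_or_ne (k + 1) a with rfl | hk
  · have := diagRows_le (m := m) (μ := lam) (k + 1)
    have := hlam.le_two_mul_diagRows (k := k) (by omega) (by omega)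
    split_ifs <;> omega
  · split_ifs <;> omega

/-- At the contents `a ≤ b` the first box outside `lam` has height one (see `diagRows`); for
regular `lam` the outer boxes of contents `a, …, b` then form an addable path of height one. -/
structure AddableSpan (m : ℕ) (lam : ℕ → ℕ) (a b : ℤ) : Prop where
  le : a ≤ b
  two_sub_le : 2 - (m : ℤ) ≤ a
  le_sub_two : b ≤ (m : ℤ) - 2
  diagRows_left : 2 * (diagRows m lam a : ℤ) = m + a
  diagRows_right : 2 * (diagRows m lam b : ℤ) = m + b

namespace AddableSpan

variable (h : AddableSpan m lam a b) (hlam : Regular m m lam)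
include h hlam

lemma diagRows_bounds : ∀ k ∈ Set.Icc a b,
    (m : ℤ) + k ≤ 2 * diagRows m lam k ∧ k + 1 ≤ diagRows m lam k ∧
      diagRows m lam k + 1 ≤ m ∧ (diagRows m lam k : ℤ) + 1 - k ≤ m := by
  obtain ⟨hab, ha, hb, hZa, hZb⟩ := h
  rintro k ⟨hak, hkb⟩
  have hreg := hlam.le_two_mul_diagRows (k := k) (by omega) (by omega)
  have hmono : diagRows m lam k ≤ diagRows m lam b := diagRows_mono hkb
  have hstep := le_add_of_forall_succ_le (diagRows_succ_le hlam.1) a (k - a).toNat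
  rw [Int.toNat_of_nonneg (by omega), add_sub_cancel] at hstep
  omega

lemma isDyckRep_outerBox : IsDyckRep m (outerBox m lam '' Set.Icc a b) a b 1 := by
  have hb := h.diagRows_bounds hlam
  have hlev : ∀ k ∈ Set.Icc a b, lev (outerBox m lam k) = 2 * diagRows m lam k + 1 - k :=
    fun k hk => lev_outerBox (by linarith [(hb k hk).2.1])
  have hZa := h.diagRows_left
  have hZb := h.diagRows_right
  have hrep := isDyckRep_image_Icc m (outerBox m lam) h.le
    (fun k hk => cont_outerBox (by linarith [(hb k hk).2.1]))
    (fun k hak hkb => isStep_outerBox hlam.1 (hb k ⟨hak, hkb.le⟩).2.1)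
    (fun k hk => by
      rw [hlev k hk, hlev a ⟨le_rfl, h.le⟩, hlev b ⟨h.le, le_rfl⟩]
      have := (hb k hk).1
      omega)
  rwa [hlev a ⟨le_rfl, h.le⟩,
    show 2 * (diagRows m lam a : ℤ) + 1 - a - m = 1 by omega] at hrep

lemma mem_diagram_partitionOfProfile_iff {t : ℕ × ℕ} :
    t ∈ diagram (partitionOfProfile m (addProfile m lam a b)) ↔
      t ∈ diagram lam ∨ t ∈ outerBox m lam '' Set.Icc a b := by
  obtain ⟨r, c⟩ := t
  have hb := h.diagRows_bounds hlam
  by_cases hrc : 1 ≤ r ∧ 1 ≤ c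
  swap
  · refine iff_of_false (fun ht => hrc ⟨ht.1, ht.2.1⟩) ?_
    rintro (ht | ⟨k, hk, hkt⟩)
    · exact hrc ⟨ht.1, ht.2.1⟩
    · simp only [outerBox, Prod.mk.injEq] at hkt
      have := hb _ hk
      omega
  simp only [diagram, Set.mem_ofPred_eq, hrc, true_and, cont, Set.mem_Icc,
    mem_outerBox_image_iff (t := (r, c)) hrc.2]
  rcases le_or_gt c m with hcm | hcm
  · rw [le_partitionOfProfile_iff (monotone_addProfile hlam h.le_sub_two h.diagRows_right)
      hrc.2 hcm, addProfile, ← le_diagRows_sub_iff hlam.1 hrc.1 hrc.2]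
    split_ifs <;> omega
  · have := partitionOfProfile_le (N := m) (g := addProfile m lam a b) r
    have := hlam.1.1 1 r le_rfl hrc.1
    have := hlam.1.2.1
    refine iff_of_false (by omega) ?_
    rintro (h' | ⟨hk, hrow⟩)
    · omega
    · have := (hb _ hk).2.2.2
      omega

lemma exists_regular_removesH : ∃ ν, Regular m m ν ∧ RemovesH m m ν a b 1 lam := by
  set ν := partitionOfProfile m (addProfile m lam a b)
  have hmem := fun t => h.mem_diagram_partitionOfProfile_iff hlam (t := t)
  have hν : IsPtn m m ν := by
    refine ⟨fun i j _ hij => partitionOfProfile_anti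
      (addProfile_succ_le hlam h.two_sub_le h.diagRows_left) hij, partitionOfProfile_le 1,
      fun r hr => ?_⟩
    by_contra hne
    rcases (hmem (r, ν r)).mp ⟨by omega, by omega, le_rfl⟩ with
      ⟨-, -, hlam_r⟩ | ⟨k, hk, hkt⟩
    · have := hlam.1.2.2 r hr
      simp only at hlam_r
      omega
    · have := (h.diagRows_bounds hlam k hk).2.2.1
      simp only [outerBox, Prod.mk.injEq] at hkt
      omega
  refine ⟨ν, hlam.of_le hν fun r hr => ?_, _, h.isDyckRep_outerBox hlam,
    fun t ht => (hmem t).mpr (Or.inr ht), hlam.1, ?_⟩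
  · by_contra! hlt
    have : lam r ≤ ν r := ((hmem (r, lam r)).mpr (Or.inl ⟨hr, by omega, le_rfl⟩)).2.2
    omega
  · ext t
    rw [Set.mem_sdiff, hmem]
    refine ⟨fun ht => ⟨Or.inl ht, ?_⟩, fun ⟨ht, hnot⟩ => ht.resolve_right hnot⟩
    rintro ⟨k, -, rfl⟩
    exact outerBox_notMem_diagram hlam.1 k ht

end AddableSpan

end addPath

lemma Regular.exists_isRt {m : ℕ} {lam : ℕ → ℕ} (hlam : Regular m m lam) {P : ℤ × ℤ}
    (hP : DRemH m m lam P.1 P.2 0) (hlast : P.2 ≠ (m : ℤ) - 1) :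
    ∃ ν R, Regular m m ν ∧ RemovesH m m ν R.1 R.2 1 lam ∧ IsRt m m lam P R ∧
      ∀ R' : ℤ × ℤ, DAddH m m lam R'.1 R'.2 1 → R'.2 ≤ R.2 := by
  obtain ⟨hl1, hl2, hZa⟩ := hP.two_mul_diagRows_of_height_zero hlam
  set T := (Finset.Icc (P.2 + 1) ((m : ℤ) - 2)).filter
    fun k => 2 * (diagRows m lam k : ℤ) = m + k
  have hT : P.2 + 1 ∈ T :=
    Finset.mem_filter.mpr ⟨Finset.mem_Icc.mpr ⟨le_rfl, by omega⟩, by omega⟩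
  obtain ⟨hb1, hZb⟩ := Finset.mem_filter.mp (T.max'_mem ⟨_, hT⟩)
  rw [Finset.mem_Icc] at hb1
  have hmax : ∀ R' : ℤ × ℤ, DAddH m m lam R'.1 R'.2 1 → R'.2 ≤ T.max' ⟨_, hT⟩ := by
    intro R' hR'
    obtain ⟨-, hR'm, hZR'⟩ := hR'.two_mul_diagRows_of_height_one hlam
    by_contra! hlt
    exact (T.le_max' _
      (Finset.mem_filter.mpr ⟨Finset.mem_Icc.mpr ⟨by omega, hR'm⟩, hZR'⟩)).not_gt hlt
  obtain ⟨ν, hν, hrem⟩ := AddableSpan.exists_regular_removesH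
    ⟨hb1.1, by omega, hb1.2, by omega, hZb⟩ hlam
  refine ⟨ν, (P.2 + 1, T.max' ⟨_, hT⟩), hν, hrem,
    ⟨⟨ν, hν.1, hrem⟩, by simp, ?_⟩, hmax⟩
  intro R' hR' hgt
  have := (hR'.two_mul_diagRows_of_height_one hlam).1
  exact brN_le_brN (by simp only; omega) (hmax R' hR')

theorem neg_add_neg_one_pow_mul_self_eq_zero {A : Type*} [Ring A] (k : ℕ) {Λ N X Y : A}
    (hΛ : Λ * Λ = 0) (hX : X * N = Λ * X) (hY : Y * Λ = N * Y)
    (hcubic : Y * X * Y = (-1) ^ k * (2 * (N * Y))) :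
    (-Λ + (-1) ^ k * (X * Y)) * (-Λ + (-1) ^ k * (X * Y)) = 0 := by
  rcases neg_one_pow_eq_or A k with hk | hk <;> rw [hk] at hcubic ⊢
  · calc (-Λ + 1 * (X * Y)) * (-Λ + 1 * (X * Y))
        = Λ * Λ - Λ * (X * Y) - X * (Y * Λ) + X * (Y * X * Y) := by noncomm_ring
      _ = -(Λ * (X * Y)) - X * N * Y + 2 * (X * N * Y) := by
        rw [hΛ, hY, hcubic, one_mul]; noncomm_ring
      _ = 0 := by rw [hX]; noncomm_ring
  · calc (-Λ + -1 * (X * Y)) * (-Λ + -1 * (X * Y))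
        = Λ * Λ + Λ * (X * Y) + X * (Y * Λ) + X * (Y * X * Y) := by noncomm_ring
      _ = Λ * (X * Y) + X * N * Y - 2 * (X * N * Y) := by
        rw [hΛ, hY, hcubic]; noncomm_ring
      _ = 0 := by rw [hX]; noncomm_ring

end ArcPaper

theorem stmt18_general (m : ℕ)
    {A : Type*} [Ring A]
    (D : (ℕ → ℕ) → (ℕ → ℕ) → A) (Lo : (ℕ → ℕ) → A)
    (L : (ℕ → ℕ) → ℤ × ℤ → A)
    -- height-zero case, rightmost removable Dyck path (`last(Q) = m - 1`)
    (hLlast : ∀ lam (Q : ℤ × ℤ), Regular m m lam → DRemH m m lam Q.1 Q.2 0 →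
      Q.2 = (m : ℤ) - 1 → L lam Q = Lo lam)
    -- height-zero case, `last(Q) ≠ m - 1`
    (hLzero : ∀ lam nu (Q R : ℤ × ℤ), Regular m m lam → Regular m m nu →
      DRemH m m lam Q.1 Q.2 0 → Q.2 ≠ (m : ℤ) - 1 → IsRt m m lam Q R →
      RemovesH m m nu R.1 R.2 1 lam →
      L lam Q = -(Lo lam) + (-1 : A) ^ (brN R + 1) * (D lam nu * D nu lam))
    -- the cubic relation (case `m = n`)
    (hcubic : ∀ mu nu (P : ℤ × ℤ), Regular m m mu → Regular m m nu →
      DAddH m m mu P.1 P.2 1 → (∀ P' : ℤ × ℤ, DAddH m m mu P'.1 P'.2 1 → P'.2 ≤ P.2) →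
      RemovesH m m nu P.1 P.2 1 mu →
      D nu mu * D mu nu * D nu mu = (-1 : A) ^ (brN P + 1) * (2 * (Lo nu * D nu mu)))
    -- the loop-nilpotency and loop-commutation relations
    (hloopsq : ∀ lam, Regular m m lam → Lo lam * Lo lam = 0)
    (hloopcomm : ∀ lam mu (P : ℤ × ℤ), Regular m m lam → Regular m m mu →
      Removes m m mu P.1 P.2 lam →
      D lam mu * Lo mu = Lo lam * D lam mu ∧ D mu lam * Lo lam = Lo mu * D mu lam)
    -- the configuration: `λ` regular, `P ∈ DRem_0(λ)`
    (lam : ℕ → ℕ) (P : ℤ × ℤ)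
    (hlam : Regular m m lam) (hP : DRemH m m lam P.1 P.2 0) :
    L lam P * L lam P = 0 := by
  by_cases hlast : P.2 = (m : ℤ) - 1
  · rw [hLlast lam P hlam hP hlast]
    exact hloopsq lam hlam
  obtain ⟨ν, R, hν, hrem, hrt, hmax⟩ := hlam.exists_isRt hP hlast
  obtain ⟨hX, hY⟩ := hloopcomm lam ν R hlam hν ⟨1, hrem⟩
  rw [hLzero lam ν P R hlam hν hP hlast hrt hrem]
  exact neg_add_neg_one_pow_mul_self_eq_zero _ (hloopsq lam hlam) hX hY
    (hcubic lam ν R hlam hν hrt.1 hmax hrem)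

/-- In the presented algebra `A_{m,m}` (generators `1_λ`, `D^λ_μ`, `D^μ_λ` for
`λ = μ - P` with `P ∈ DRem_{>0}(μ)`, and degree-2 loops `L^λ_λ` for `λ` regular, subject to
the idempotent, self-dual, commuting, non-commuting, adjacent, cubic and loop relations;
quantified over an arbitrary algebra with elements satisfying those relations), for `λ`
regular and any `P ∈ DRem_0(λ)`, the generalized loop element squares to zero:
`L^λ_λ(-P)² = 0`. -/
theorem stmt18 (m : ℕ)
    {A : Type*} [Ring A]
    (e : (ℕ → ℕ) → A) (D : (ℕ → ℕ) → (ℕ → ℕ) → A) (Lo : (ℕ → ℕ) → A)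
    (L : (ℕ → ℕ) → ℤ × ℤ → A)
    -- definition of the generalized loop elements, positive-height case
    (hLpos : ∀ lam nu (Q : ℤ × ℤ) (h : ℤ), Regular m m lam → Regular m m nu →
      0 < h → RemovesH m m lam Q.1 Q.2 h nu →
      L lam Q = (-1 : A) ^ brN Q * (D lam nu * D nu lam))
    -- height-zero case, rightmost removable Dyck path (`last(Q) = m - 1`)
    (hLlast : ∀ lam (Q : ℤ × ℤ), Regular m m lam → DRemH m m lam Q.1 Q.2 0 →
      Q.2 = (m : ℤ) - 1 → L lam Q = Lo lam)
    -- height-zero case, `last(Q) ≠ m - 1`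
    (hLzero : ∀ lam nu (Q R : ℤ × ℤ), Regular m m lam → Regular m m nu →
      DRemH m m lam Q.1 Q.2 0 → Q.2 ≠ (m : ℤ) - 1 → IsRt m m lam Q R →
      RemovesH m m nu R.1 R.2 1 lam →
      L lam Q = -(Lo lam) + (-1 : A) ^ (brN R + 1) * (D lam nu * D nu lam))
    -- the idempotent relations
    (hidem : ∀ lam, Regular m m lam → e lam * e lam = e lam)
    (horth : ∀ lam mu, Regular m m lam → Regular m m mu → lam ≠ mu → e mu * e lam = 0)
    (hunit : ∀ lam mu (P : ℤ × ℤ), Regular m m lam → Regular m m mu →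
      Removes m m mu P.1 P.2 lam →
      e lam * D lam mu = D lam mu ∧ D lam mu * e mu = D lam mu ∧
      e mu * D mu lam = D mu lam ∧ D mu lam * e lam = D mu lam)
    (hloopunit : ∀ lam, Regular m m lam → e lam * Lo lam * e lam = Lo lam)
    -- the self-dual relation
    (hself : ∀ lam nu (P : ℤ × ℤ), Regular m m lam → Regular m m nu →
      Removes m m nu P.1 P.2 lam →
      D lam nu * D nu lam =
        (-1 : A) ^ (brN P - 1) *
          (2 * (∑ᶠ Q ∈ {Q : ℤ × ℤ | DRem m m lam Q.1 Q.2 ∧ DyckLt P Q}, L lam Q) +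
            ∑ᶠ Q ∈ {Q : ℤ × ℤ | DRem m m lam Q.1 Q.2 ∧ DyckAdj Q P}, L lam Q))
    -- the commuting relations
    (hcommrel : ∀ mu nuP nuQ rho (P Q : ℤ × ℤ),
      Regular m m mu → Regular m m nuP → Regular m m nuQ → Regular m m rho →
      Removes m m mu P.1 P.2 nuP → Removes m m mu Q.1 Q.2 nuQ →
      Removes m m nuP Q.1 Q.2 rho → Removes m m nuQ P.1 P.2 rho →
      D rho nuP * D nuP mu = D rho nuQ * D nuQ mu ∧
      D nuP mu * D mu nuQ = D nuP rho * D rho nuQ)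
    -- the non-commuting relation
    (hnoncomm : ∀ mu nuP nuQ rho1 rho2 (P Q : ℤ × ℤ),
      Regular m m mu → Regular m m nuP → Regular m m nuQ →
      Regular m m rho1 → Regular m m rho2 →
      Removes m m mu P.1 P.2 nuP → Removes m m mu Q.1 Q.2 nuQ →
      DyckLt P Q → ¬ DyckCommute m m mu P Q →
      Removes m m nuP Q.1 (P.1 - 1) rho1 → Removes m m rho1 (P.2 + 1) Q.2 nuQ →
      Removes m m nuP (P.2 + 1) Q.2 rho2 → Removes m m rho2 Q.1 (P.1 - 1) nuQ →
      D nuQ mu * D mu nuP = D nuQ rho1 * D rho1 nuP ∧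
      D nuQ mu * D mu nuP = D nuQ rho2 * D rho2 nuP)
    -- the adjacent relation
    (hadjrel : ∀ mu nuP rho (P Q : ℤ × ℤ),
      Regular m m mu → Regular m m nuP → Regular m m rho →
      Removes m m mu P.1 P.2 nuP → Removes m m nuP Q.1 Q.2 rho → DyckAdj P Q →
      (∀ R nuR, IsMerge m m mu P Q R → Regular m m nuR → Removes m m mu R.1 R.2 nuR →
        D rho nuP * D nuP mu = (-1 : A) ^ (brN R - brN Q) * (D rho nuR * D nuR mu)) ∧
      ((¬ ∃ R : ℤ × ℤ, IsMerge m m mu P Q R) → D rho nuP * D nuP mu = 0))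
    -- the cubic relation (case `m = n`)
    (hcubic : ∀ mu nu (P : ℤ × ℤ), Regular m m mu → Regular m m nu →
      DAddH m m mu P.1 P.2 1 → (∀ P' : ℤ × ℤ, DAddH m m mu P'.1 P'.2 1 → P'.2 ≤ P.2) →
      RemovesH m m nu P.1 P.2 1 mu →
      D nu mu * D mu nu * D nu mu = (-1 : A) ^ (brN P + 1) * (2 * (Lo nu * D nu mu)))
    -- the loop-nilpotency and loop-commutation relations
    (hloopsq : ∀ lam, Regular m m lam → Lo lam * Lo lam = 0)
    (hloopcomm : ∀ lam mu (P : ℤ × ℤ), Regular m m lam → Regular m m mu →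
      Removes m m mu P.1 P.2 lam →
      D lam mu * Lo mu = Lo lam * D lam mu ∧ D mu lam * Lo lam = Lo mu * D mu lam)
    -- the configuration: `λ` regular, `P ∈ DRem_0(λ)`
    (lam : ℕ → ℕ) (P : ℤ × ℤ)
    (hlam : Regular m m lam) (hP : DRemH m m lam P.1 P.2 0) :
    L lam P * L lam P = 0 :=
  stmt18_general m D Lo L hLlast hLzero hcubic hloopsq hloopcomm lam P hlam hP
end
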